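/- For every k ≥ 1 and all h₁, h₂ ∈ Γ_{(k)}, one has [h₁h₂, x, (p^k−p^{k−1})…, x] ≡ [h₁, x, (p^k−p^{k−1})…, x] · [h₂, x, (p^k−p^{k−1})…, x] modulo L̃_k, i.e. ([h₁,x,(p^k−p^{k−1})…,x]·[h₂,x,(p^k−p^{k−1})…,x])^{−1}·[h₁h₂,x,(p^k−p^{k−1})…,x] ∈ L̃_k. (Lemma 5.5(i) of the paper, with the lower-central term γ_{p^{k−1}}(𝔊(p)) described via its generators.) -/

import Mathlib

/-!
The subgroup `H = ⟨c_i⟩` is stable under `a ↦ [a, x]` and, since the `z_{m,n}` centralise it,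
has class at most two: `[H, H]` is central in `H`. Consequently
`[ab, x, (n)…, x] = [a, x, (n)…, x] · [b, x, (n)…, x] · δₙ(a, b)` for `a, b ∈ H`, where the defect
`δₙ(a, b) = itcDefect x a b n ∈ [H, H]` obeys
`δₙ₊₁ = [δₙ, x] · [[a, x, (n+1)…, x], [b, x, (n)…, x]]`.
The defect is bimultiplicative on `H`, vanishes when either argument lies in `[H, H]`, and on
generators `δₙ(c_i, c_j)` is the product defining `w̃_{i,j,k}` for `n = p^k − p^{k−1}`.
Passing to `Γ / L̃_k` kills these products, and `Γ_{(k)}` is generated by the `c_j` with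
`j ≥ p^{k−1}` and elements of `[H, H]`, so the defect vanishes on `Γ_{(k)}`.
-/

namespace Paper

variable {G : Type*} [Group G]

/-- The paper's commutator `[a,b] = a⁻¹ b⁻¹ a b`. -/
def pc {G : Type*} [Group G] (a b : G) : G := a⁻¹ * b⁻¹ * a * b

/-- The left-normed iterated commutator `[a, x, (r)…, x]`. -/
def itc {G : Type*} [Group G] (x a : G) : ℕ → G
  | 0 => a
  | r + 1 => pc (itc x a r) x

/-- `c_i`, where `c_1 = y` and `c_{i+1} = [c_i, x]`; equivalently `c_i = [y, x, (i-1)…, x]`. -/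
def cc (x y : G) (i : ℕ) : G := itc x y (i - 1)

/-- `z_{m,n} = [c_m, c_n]`. -/
def zz (x y : G) (m n : ℕ) : G := pc (cc x y m) (cc x y n)

/-- `H = ⟨c_i : i ≥ 1⟩`. -/
def Hsub (x y : G) : Subgroup G :=
  Subgroup.closure {g | ∃ i, 1 ≤ i ∧ g = cc x y i}

/-- `Z = ⟨z_{m,n} : m, n ≥ 1⟩` (odd-prime case). -/
def ZsubP (x y : G) : Subgroup G :=
  Subgroup.closure {g | ∃ m n, 1 ≤ m ∧ 1 ≤ n ∧ g = zz x y m n}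

/-- `w_{i,j,k} = ∏_{t=1}^{p^k−1} [z_{i+t,j+t−1}, x, (p^k−1−t)…, x]`,
factors in order of increasing `t` (reindexed by `t ↦ t+1`). -/
def wwP (p : ℕ) (x y : G) (i j k : ℕ) : G :=
  ((List.range (p ^ k - 1)).map
    (fun t => itc x (zz x y (i + t + 1) (j + t)) (p ^ k - 2 - t))).prod

/-- `d_k(h) = [h,x,(p^k−1)…,x]⁻¹ · x^{−p^k} · (xh)^{p^k}`. -/
def ddP (p : ℕ) (x y : G) (k : ℕ) (h : G) : G :=
  (itc x h (p ^ k - 1))⁻¹ * (x ^ p ^ k)⁻¹ * (x * h) ^ p ^ k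

/-- `L_k`, the normal closure of `{w_{i,j,k} : i,j ≥ 1} ∪ {d_k(y)} ∪ {z_{m,n} : m ≥ p^k, n ≥ 1}`. -/
def LsubP (p : ℕ) (x y : G) (k : ℕ) : Subgroup G :=
  Subgroup.normalClosure (({g | ∃ i j, 1 ≤ i ∧ 1 ≤ j ∧ g = wwP p x y i j k} ∪
      {ddP p x y k y}) ∪
    {g | ∃ m n, p ^ k ≤ m ∧ 1 ≤ n ∧ g = zz x y m n})

/-- `Γ^{p^k} = ⟨g^{p^k} : g ∈ Γ⟩`. -/
def powSubP (G : Type*) [Group G] (p k : ℕ) : Subgroup G :=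
  Subgroup.closure {g | ∃ a : G, g = a ^ p ^ k}

/-- `Θ̃_k = ⟨z_{m,n} : m ≥ p^k, n ≥ 1⟩`. -/
def ThetaT (p : ℕ) (x y : G) (k : ℕ) : Subgroup G :=
  Subgroup.closure {g | ∃ m n, p ^ k ≤ m ∧ 1 ≤ n ∧ g = zz x y m n}

/-- `[A, g] = ⟨[a,g] : a ∈ A⟩`. -/
def commSub (A : Subgroup G) (g : G) : Subgroup G :=
  Subgroup.closure {c | ∃ a ∈ A, c = pc a g}

/-- The `r`-fold iterate `[A, g, (r)…, g]`. -/
def itcSub (A : Subgroup G) (g : G) : ℕ → Subgroup G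
  | 0 => A
  | r + 1 => commSub (itcSub A g r) g

/-- `Λ̃_k`. -/
def LambdaT (p : ℕ) (x y : G) (k : ℕ) : Subgroup G :=
  Subgroup.closure {g | ∃ m n, g = itc (x ^ p ^ (k - 1)) (zz x y m n) (p - 1) ∧
    ((p ^ (k - 1) ≤ m ∧ m < p ^ k ∧
        max 1 (m - m / p ^ (k - 1) * p ^ (k - 1)) ≤ n ∧ n < p ^ (k - 1)) ∨
      (∃ i, 2 ≤ i ∧ i ≤ p - 2 ∧ m = i * p ^ (k - 1) ∧ n = p ^ (k - 1)))}

/-- `w̃_{i,j,k} = ∏_{t=1}^{p^k−p^{k−1}} [z_{i+t,j+t−1}, x, (p^k−p^{k−1}−t)…, x]`,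
factors in order of increasing `t` (reindexed by `t ↦ t+1`). -/
def wwT (p : ℕ) (x y : G) (i j k : ℕ) : G :=
  ((List.range (p ^ k - p ^ (k - 1))).map
    (fun t => itc x (zz x y (i + t + 1) (j + t)) (p ^ k - p ^ (k - 1) - 1 - t))).prod

/-- `d̃_k(h) = [h,x,(p^k−p^{k−1})…,x]⁻¹ · x^{−p^k} · (x^{p^{k−1}}h)^p`. -/
def ddT (p : ℕ) (x y : G) (k : ℕ) (h : G) : G :=
  (itc x h (p ^ k - p ^ (k - 1)))⁻¹ * (x ^ p ^ k)⁻¹ * (x ^ p ^ (k - 1) * h) ^ p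

/-- `L̃_k`, the normal closure of `{w̃_{i,j,k} : i,j ≥ p^{k−1}} ∪ {d̃_k(y)}`. -/
def LsubT (p : ℕ) (x y : G) (k : ℕ) : Subgroup G :=
  Subgroup.normalClosure
    ({g | ∃ i j, p ^ (k - 1) ≤ i ∧ p ^ (k - 1) ≤ j ∧ g = wwT p x y i j k} ∪
      {ddT p x y k y})

/-- `Γ_{(k)} = ⟨c_j (j ≥ p^{k−1}), z_{m,n} (m > n ≥ 1, m + n ≥ p^{k−1})⟩`. -/
def GammaK (p : ℕ) (x y : G) (k : ℕ) : Subgroup G :=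
  Subgroup.closure ({g | ∃ j, p ^ (k - 1) ≤ j ∧ g = cc x y j} ∪
    {g | ∃ m n, 1 ≤ n ∧ n < m ∧ p ^ (k - 1) ≤ m + n ∧ g = zz x y m n})


open scoped commutatorElement

section Identities

variable {G' : Type*} [Group G']

lemma commutatorElement_eq_pc (a b : G) : ⁅a, b⁆ = pc a⁻¹ b⁻¹ := by
  simp [pc, commutatorElement_def]

lemma pc_inv (a b : G) : (pc a b)⁻¹ = pc b a := by
  simp only [pc]; group

lemma pc_one_left (g : G) : pc 1 g = 1 := by
  simp [pc]

lemma pc_mul_left (a b g : G) : pc (a * b) g = b⁻¹ * pc a g * b * pc b g := by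
  simp only [pc]; group

lemma pc_mul_right (a u v : G) : pc a (u * v) = pc a v * (v⁻¹ * pc a u * v) := by
  simp only [pc]; group

lemma pc_inv_right (a u : G) : pc a u⁻¹ = u * (pc a u)⁻¹ * u⁻¹ := by
  simp only [pc]; group

lemma inv_mul_mul_eq_mul_pc (a g : G) : g⁻¹ * a * g = a * pc a g := by
  simp only [pc]; group

lemma pc_eq_one_of_commute {a b : G} (h : Commute a b) : pc a b = 1 := by
  simp only [pc]; rw [mul_assoc _ a b, h.eq]; group

lemma map_pc (f : G →* G') (a b : G) : f (pc a b) = pc (f a) (f b) := by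
  simp [pc]

lemma map_itc (f : G →* G') (x a : G) (n : ℕ) : f (itc x a n) = itc (f x) (f a) n := by
  induction n with
  | zero => rfl
  | succ n ih => simp only [itc, map_pc, ih]

end Identities

section ClassTwo

open Subgroup

lemma pc_mem_centralizer_closure {S : Set G} {a : G}
    (ha : ∀ t ∈ S, pc a t ∈ centralizer (closure S : Set G)) :
    ∀ b ∈ closure S, pc a b ∈ centralizer (closure S : Set G) := by
  have hfix : ∀ {u v : G}, pc a u ∈ centralizer (closure S : Set G) → v ∈ closure S →
      Commute v (pc a u) := fun hu hv => mem_centralizer_iff.1 hu _ hv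
  intro b hb
  induction hb using closure_induction with
  | mem t ht => exact ha t ht
  | one => simp [pc]
  | mul u v hu hv ihu ihv =>
      rw [pc_mul_right, mul_assoc v⁻¹, (hfix ihu hv).inv_mul_cancel_assoc]
      exact mul_mem ihv ihu
  | inv u hu ih =>
      rw [pc_inv_right, mul_assoc, (hfix ih hu).inv_right.mul_inv_cancel_assoc]
      exact inv_mem ih

lemma commutator_closure_le_centralizer {S : Set G}
    (hS : ∀ s ∈ S, ∀ t ∈ S, ∀ u ∈ S, Commute (pc s t) u) :
    ⁅closure S, closure S⁆ ≤ centralizer (closure S : Set G) := by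
  have hgen : ∀ s ∈ S, ∀ b ∈ closure S, pc s b ∈ centralizer (closure S : Set G) :=
    fun s hs => pc_mem_centralizer_closure fun t ht => by
      rw [centralizer_closure]
      exact mem_centralizer_iff.2 fun u hu => (hS s hs t ht u hu).symm
  rw [commutator_le]
  intro a ha b hb
  -- Apply `pc_mem_centralizer_closure` a second time, in the other slot, via `[a, b]⁻¹ = [b, a]`.
  rw [commutatorElement_eq_pc, ← pc_inv]
  refine inv_mem (pc_mem_centralizer_closure (fun s hs => ?_) _ (inv_mem ha))
  rw [← pc_inv]
  exact inv_mem (hgen s hs _ (inv_mem hb))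

variable {H : Subgroup G}

lemma pc_mem_commutator {a b : G} (ha : a ∈ H) (hb : b ∈ H) : pc a b ∈ ⁅H, H⁆ := by
  simpa [commutatorElement_eq_pc] using commutator_mem_commutator (inv_mem ha) (inv_mem hb)

section Central

variable (hD : ⁅H, H⁆ ≤ centralizer (H : Set G))
include hD

lemma commute_of_mem_commutator {d h : G} (hd : d ∈ ⁅H, H⁆) (hh : h ∈ H) : Commute h d :=
  mem_centralizer_iff.1 (hD hd) h hh

lemma pc_eq_one_of_mem_commutator_left {d h : G} (hd : d ∈ ⁅H, H⁆) (hh : h ∈ H) :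
    pc d h = 1 :=
  pc_eq_one_of_commute (commute_of_mem_commutator hD hd hh).symm

lemma pc_eq_one_of_mem_commutator_right {h d : G} (hh : h ∈ H) (hd : d ∈ ⁅H, H⁆) :
    pc h d = 1 :=
  pc_eq_one_of_commute (commute_of_mem_commutator hD hd hh)

lemma pc_mul_left_of_mem {a₁ a₂ b : G} (ha₁ : a₁ ∈ H) (ha₂ : a₂ ∈ H) (hb : b ∈ H) :
    pc (a₁ * a₂) b = pc a₁ b * pc a₂ b := by
  rw [pc_mul_left, mul_assoc a₂⁻¹,
    (commute_of_mem_commutator hD (pc_mem_commutator ha₁ hb) ha₂).inv_mul_cancel_assoc]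

lemma pc_mul_right_of_mem {a b₁ b₂ : G} (ha : a ∈ H) (hb₁ : b₁ ∈ H) (hb₂ : b₂ ∈ H) :
    pc a (b₁ * b₂) = pc a b₁ * pc a b₂ := by
  rw [pc_mul_right, mul_assoc b₂⁻¹,
    (commute_of_mem_commutator hD (pc_mem_commutator ha hb₁) hb₂).inv_mul_cancel_assoc]
  exact (commute_of_mem_commutator hD (pc_mem_commutator ha hb₁)
    (commutator_le_self H (pc_mem_commutator ha hb₂))).eq

end Central

def itcDefect (X a b : G) : ℕ → G
  | 0 => 1
  | n + 1 => pc (itcDefect X a b n) X * pc (itc X a (n + 1)) (itc X b n)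

section Stable

variable {X : G} (hX : ∀ a ∈ H, pc a X ∈ H)
include hX

lemma itc_mem {a : G} (ha : a ∈ H) (n : ℕ) : itc X a n ∈ H := by
  induction n with
  | zero => exact ha
  | succ n ih => exact hX _ ih

lemma pc_mem_commutator_of_mem_commutator {d : G} (hd : d ∈ ⁅H, H⁆) : pc d X ∈ ⁅H, H⁆ := by
  let conjX : G →* G := (MulAut.conj X⁻¹).toMonoidHom
  have hH : H.map conjX ≤ H := by
    rintro _ ⟨a, ha, rfl⟩
    simpa [conjX, inv_mul_mul_eq_mul_pc] using mul_mem ha (hX a ha)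
  have hconj : conjX d ∈ ⁅H, H⁆ :=
    commutator_mono hH hH (by rw [← map_commutator]; exact mem_map_of_mem conjX hd)
  have hpc : pc d X = d⁻¹ * conjX d := by simp [conjX, pc, mul_assoc]
  rw [hpc]
  exact mul_mem (inv_mem hd) hconj

lemma itc_mem_commutator {d : G} (hd : d ∈ ⁅H, H⁆) (n : ℕ) : itc X d n ∈ ⁅H, H⁆ := by
  induction n with
  | zero => exact hd
  | succ n ih => exact pc_mem_commutator_of_mem_commutator hX ih

lemma itcDefect_mem_commutator {a b : G} (ha : a ∈ H) (hb : b ∈ H) (n : ℕ) :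
    itcDefect X a b n ∈ ⁅H, H⁆ := by
  induction n with
  | zero => exact one_mem _
  | succ n ih =>
      exact mul_mem (pc_mem_commutator_of_mem_commutator hX ih)
        (pc_mem_commutator (itc_mem hX ha (n + 1)) (itc_mem hX hb n))

variable (hD : ⁅H, H⁆ ≤ centralizer (H : Set G))
include hD

lemma pc_mul_left_eq_mul_pc {a b : G} (ha : a ∈ H) (hb : b ∈ H) :
    pc (a * b) X = pc a X * pc b X * pc (pc a X) b := by
  rw [pc_mul_left, inv_mul_mul_eq_mul_pc, mul_assoc (pc a X),
    (commute_of_mem_commutator hD (pc_mem_commutator (hX a ha) hb) (hX b hb)).eq.symm, mul_assoc]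

lemma pc_mul_left_of_mem_commutator {a d : G} (ha : a ∈ H) (hd : d ∈ ⁅H, H⁆) :
    pc (a * d) X = pc a X * pc d X := by
  rw [pc_mul_left_eq_mul_pc hX hD ha (commutator_le_self H hd),
    pc_eq_one_of_mem_commutator_right hD (hX a ha) hd, mul_one]

lemma pc_list_prod_left {l : List G} (hl : ∀ d ∈ l, d ∈ ⁅H, H⁆) :
    pc l.prod X = (l.map (pc · X)).prod := by
  induction l with
  | nil => simp [pc_one_left]
  | cons d l ih =>
      have hl' : ∀ d ∈ l, d ∈ ⁅H, H⁆ := fun d' hd' => hl d' (List.mem_cons_of_mem d hd')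
      rw [List.prod_cons, pc_mul_left_of_mem_commutator hX hD
        (commutator_le_self H (hl d List.mem_cons_self)) (list_prod_mem hl'),
        List.map_cons, List.prod_cons, ih hl']

lemma itc_mul {a b : G} (ha : a ∈ H) (hb : b ∈ H) (n : ℕ) :
    itc X (a * b) n = itc X a n * itc X b n * itcDefect X a b n := by
  induction n with
  | zero => simp [itc, itcDefect]
  | succ n ih =>
      have hu := itc_mem hX ha n
      have hv := itc_mem hX hb n
      have hT := itcDefect_mem_commutator hX ha hb n
      simp only [itc, itcDefect]
      rw [ih, pc_mul_left_of_mem_commutator hX hD (mul_mem hu hv) hT, pc_mul_left_eq_mul_pc hX hD hu hv,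
        mul_assoc, (commute_of_mem_commutator hD (pc_mem_commutator (hX _ hu) hv)
          (commutator_le_self H (pc_mem_commutator_of_mem_commutator hX hT))).eq.symm]

lemma itcDefect_eq_one_of_left_mem {a b : G} (ha : a ∈ ⁅H, H⁆) (hb : b ∈ H) (n : ℕ) :
    itcDefect X a b n = 1 := by
  induction n with
  | zero => rfl
  | succ n ih =>
      rw [itcDefect, ih, pc_one_left, one_mul, pc_eq_one_of_mem_commutator_left hD
        (itc_mem_commutator hX ha (n + 1)) (itc_mem hX hb n)]

lemma itcDefect_eq_one_of_right_mem {a b : G} (ha : a ∈ H) (hb : b ∈ ⁅H, H⁆) (n : ℕ) :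
    itcDefect X a b n = 1 := by
  induction n with
  | zero => rfl
  | succ n ih =>
      rw [itcDefect, ih, pc_one_left, one_mul, pc_eq_one_of_mem_commutator_right hD
        (itc_mem hX ha (n + 1)) (itc_mem_commutator hX hb n)]

lemma itcDefect_mul_left {a₁ a₂ b : G} (ha₁ : a₁ ∈ H) (ha₂ : a₂ ∈ H) (hb : b ∈ H) (n : ℕ) :
    itcDefect X (a₁ * a₂) b n = itcDefect X a₁ b n * itcDefect X a₂ b n := by
  induction n with
  | zero => simp [itcDefect]
  | succ n ih =>
      have hu₁ := itc_mem hX ha₁ (n + 1)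
      have hu₂ := itc_mem hX ha₂ (n + 1)
      have hv := itc_mem hX hb n
      have hT₁ := itcDefect_mem_commutator hX ha₁ hb n
      have hT₂ := itcDefect_mem_commutator hX ha₂ hb n
      have hT := itcDefect_mem_commutator hX ha₁ ha₂ (n + 1)
      simp only [itcDefect]
      rw [ih, itc_mul hX hD ha₁ ha₂, pc_mul_left_of_mem hD (mul_mem hu₁ hu₂)
        (commutator_le_self H hT) hv, pc_eq_one_of_mem_commutator_left hD hT hv, mul_one,
        pc_mul_left_of_mem hD hu₁ hu₂ hv,
        pc_mul_left_of_mem_commutator hX hD (commutator_le_self H hT₁) hT₂]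
      exact (commute_of_mem_commutator hD (pc_mem_commutator hu₁ hv)
        (commutator_le_self H (pc_mem_commutator_of_mem_commutator hX hT₂))).mul_mul_mul_comm _ _

lemma itcDefect_mul_right {a b₁ b₂ : G} (ha : a ∈ H) (hb₁ : b₁ ∈ H) (hb₂ : b₂ ∈ H) (n : ℕ) :
    itcDefect X a (b₁ * b₂) n = itcDefect X a b₁ n * itcDefect X a b₂ n := by
  induction n with
  | zero => simp [itcDefect]
  | succ n ih =>
      have hu := itc_mem hX ha (n + 1)
      have hv₁ := itc_mem hX hb₁ n
      have hv₂ := itc_mem hX hb₂ n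
      have hT₁ := itcDefect_mem_commutator hX ha hb₁ n
      have hT₂ := itcDefect_mem_commutator hX ha hb₂ n
      have hT := itcDefect_mem_commutator hX hb₁ hb₂ n
      simp only [itcDefect]
      rw [ih, itc_mul hX hD hb₁ hb₂, pc_mul_right_of_mem hD hu (mul_mem hv₁ hv₂)
        (commutator_le_self H hT), pc_eq_one_of_mem_commutator_right hD hu hT, mul_one,
        pc_mul_right_of_mem hD hu hv₁ hv₂,
        pc_mul_left_of_mem_commutator hX hD (commutator_le_self H hT₁) hT₂]
      exact (commute_of_mem_commutator hD (pc_mem_commutator hu hv₁)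
        (commutator_le_self H (pc_mem_commutator_of_mem_commutator hX hT₂))).mul_mul_mul_comm _ _

end Stable

end ClassTwo

section Generators

open Subgroup

lemma eq_one_of_mem_closure {G' : Type*} [Group G'] {H : Subgroup G} {S : Set G}
    (hS : S ⊆ H) {f : G → G'} (hf : ∀ a ∈ H, ∀ b ∈ H, f (a * b) = f a * f b)
    (h1 : ∀ s ∈ S, f s = 1) : ∀ a ∈ closure S, f a = 1 := by
  have hle : closure S ≤ H := (closure_le _).2 hS
  have hf1 : f 1 = 1 := by simpa using hf 1 (one_mem _) 1 (one_mem _)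
  intro a ha
  induction ha using closure_induction with
  | mem s hs => exact h1 s hs
  | one => exact hf1
  | mul u v hu hv ihu ihv => rw [hf u (hle hu) v (hle hv), ihu, ihv, mul_one]
  | inv u hu ih =>
      have h := hf u⁻¹ (inv_mem (hle hu)) u (hle hu)
      rw [inv_mul_cancel, hf1, ih, mul_one] at h
      exact h.symm

lemma pc_mem_closure {S : Set G} {X : G} (hS : ∀ s ∈ S, pc s X ∈ closure S) :
    ∀ a ∈ closure S, pc a X ∈ closure S := by
  let conjX : G →* G := (MulAut.conj X⁻¹).toMonoidHom
  have hle : closure S ≤ (closure S).comap conjX := (closure_le _).2 fun s hs => by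
    simpa [conjX, inv_mul_mul_eq_mul_pc] using mul_mem (subset_closure hs) (hS s hs)
  intro a ha
  have hpc : pc a X = a⁻¹ * conjX a := by simp [conjX, pc, mul_assoc]
  rw [hpc]
  exact mul_mem (inv_mem ha) (hle ha)

def seqSubgroup (C : ℕ → G) : Subgroup G := closure {g | ∃ i, 1 ≤ i ∧ g = C i}

variable {X : G} {C : ℕ → G}

lemma seq_mem_seqSubgroup {i : ℕ} (hi : 1 ≤ i) : C i ∈ seqSubgroup C :=
  subset_closure ⟨i, hi, rfl⟩

lemma pc_mem_seqSubgroup (hC : ∀ i, 1 ≤ i → C (i + 1) = pc (C i) X) :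
    ∀ a ∈ seqSubgroup C, pc a X ∈ seqSubgroup C :=
  pc_mem_closure <| by
    rintro _ ⟨i, hi, rfl⟩
    rw [← hC i hi]
    exact seq_mem_seqSubgroup (by omega)

lemma commutator_seqSubgroup_le_centralizer
    (hz : ∀ m n i, 1 ≤ m → 1 ≤ n → 1 ≤ i → Commute (pc (C m) (C n)) (C i)) :
    ⁅seqSubgroup C, seqSubgroup C⁆ ≤ centralizer (seqSubgroup C : Set G) :=
  commutator_closure_le_centralizer <| by
    rintro _ ⟨m, hm, rfl⟩ _ ⟨n, hn, rfl⟩ _ ⟨i, hi, rfl⟩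
    exact hz m n i hm hn hi

variable (hC : ∀ i, 1 ≤ i → C (i + 1) = pc (C i) X)
include hC

lemma itc_seq {i : ℕ} (hi : 1 ≤ i) (n : ℕ) : itc X (C i) n = C (i + n) := by
  induction n with
  | zero => rfl
  | succ n ih => rw [itc, ih, ← hC (i + n) (by omega), Nat.add_assoc]

lemma itcDefect_seq (hD : ⁅seqSubgroup C, seqSubgroup C⁆ ≤ centralizer (seqSubgroup C : Set G))
    {i j : ℕ} (hi : 1 ≤ i) (hj : 1 ≤ j) (n : ℕ) :
    itcDefect X (C i) (C j) n =
      ((List.range n).map fun t => itc X (pc (C (i + t + 1)) (C (j + t))) (n - 1 - t)).prod := by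
  induction n with
  | zero => rfl
  | succ n ih =>
      have hz : ∀ t, pc (C (i + t + 1)) (C (j + t)) ∈ ⁅seqSubgroup C, seqSubgroup C⁆ :=
        fun t => pc_mem_commutator (seq_mem_seqSubgroup (by omega)) (seq_mem_seqSubgroup (by omega))
      rw [itcDefect, ih, itc_seq hC hi, itc_seq hC hj, pc_list_prod_left (pc_mem_seqSubgroup hC) hD
        (by simpa using fun t _ => itc_mem_commutator (pc_mem_seqSubgroup hC) (hz t) _),
        List.range_succ, List.map_append, List.prod_append, List.map_map]
      congr 1
      · refine congrArg List.prod (List.map_congr_left fun t ht => ?_)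
        have : n + 1 - 1 - t = n - 1 - t + 1 := by simp at ht; omega
        simp only [Function.comp, this, itc]
      · simp [Nat.add_assoc, itc]

end Generators

section Vanishing

open Subgroup

variable {X : G} {C : ℕ → G} {q r : ℕ}

lemma tail_subset_seqSubgroup (hq : 1 ≤ q) :
    {g | ∃ j, q ≤ j ∧ g = C j} ∪ ↑⁅seqSubgroup C, seqSubgroup C⁆ ⊆ seqSubgroup C := by
  rintro _ (⟨j, hj, rfl⟩ | hd)
  exacts [seq_mem_seqSubgroup (hq.trans hj), commutator_le_self _ hd]

variable (hC : ∀ i, 1 ≤ i → C (i + 1) = pc (C i) X)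
  (hz : ∀ m n i, 1 ≤ m → 1 ≤ n → 1 ≤ i → Commute (pc (C m) (C n)) (C i))
  (hq : 1 ≤ q)
  (hw : ∀ i j, q ≤ i → q ≤ j →
    ((List.range r).map fun t => itc X (pc (C (i + t + 1)) (C (j + t))) (r - 1 - t)).prod = 1)
include hC hz hq hw

lemma itcDefect_seq_left_eq_one {i : ℕ} (hi : q ≤ i) {b : G}
    (hb : b ∈ closure ({g | ∃ j, q ≤ j ∧ g = C j} ∪ ↑⁅seqSubgroup C, seqSubgroup C⁆)) :
    itcDefect X (C i) b r = 1 := by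
  have hX := pc_mem_seqSubgroup hC
  have hD := commutator_seqSubgroup_le_centralizer hz
  have hCi : C i ∈ seqSubgroup C := seq_mem_seqSubgroup (hq.trans hi)
  refine eq_one_of_mem_closure (tail_subset_seqSubgroup hq) (f := fun b => itcDefect X (C i) b r)
    (fun b₁ hb₁ b₂ hb₂ => itcDefect_mul_right hX hD hCi hb₁ hb₂ r) ?_ b hb
  rintro _ (⟨j, hj, rfl⟩ | hd)
  · rw [itcDefect_seq hC hD (hq.trans hi) (hq.trans hj)]
    exact hw i j hi hj
  · exact itcDefect_eq_one_of_right_mem hX hD hCi hd r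

lemma itcDefect_eq_one_of_mem_closure {a b : G}
    (ha : a ∈ closure ({g | ∃ j, q ≤ j ∧ g = C j} ∪ ↑⁅seqSubgroup C, seqSubgroup C⁆))
    (hb : b ∈ closure ({g | ∃ j, q ≤ j ∧ g = C j} ∪ ↑⁅seqSubgroup C, seqSubgroup C⁆)) :
    itcDefect X a b r = 1 := by
  have hX := pc_mem_seqSubgroup hC
  have hD := commutator_seqSubgroup_le_centralizer hz
  have hb' := (closure_le _).2 (tail_subset_seqSubgroup hq) hb
  refine eq_one_of_mem_closure (tail_subset_seqSubgroup hq) (f := fun a => itcDefect X a b r)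
    (fun a₁ ha₁ a₂ ha₂ => itcDefect_mul_left hX hD ha₁ ha₂ hb' r) ?_ a ha
  rintro _ (⟨i, hi, rfl⟩ | hd)
  · exact itcDefect_seq_left_eq_one hC hz hq hw hi hb
  · exact itcDefect_eq_one_of_left_mem hX hD hd hb' r

theorem itc_mul_of_mem_closure {a b : G}
    (ha : a ∈ closure {g | ∃ j, q ≤ j ∧ g = C j} ⊔ ⁅seqSubgroup C, seqSubgroup C⁆)
    (hb : b ∈ closure {g | ∃ j, q ≤ j ∧ g = C j} ⊔ ⁅seqSubgroup C, seqSubgroup C⁆) :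
    itc X (a * b) r = itc X a r * itc X b r := by
  rw [← closure_eq ⁅seqSubgroup C, seqSubgroup C⁆, ← Subgroup.closure_union] at ha hb
  have hle := (closure_le _).2 (tail_subset_seqSubgroup (C := C) hq)
  rw [itc_mul (pc_mem_seqSubgroup hC) (commutator_seqSubgroup_le_centralizer hz) (hle ha) (hle hb),
    itcDefect_eq_one_of_mem_closure hC hz hq hw ha hb, mul_one]

end Vanishing

section Concrete

variable {G' : Type*} [Group G']

lemma cc_succ (x y : G) {i : ℕ} (hi : 1 ≤ i) : cc x y (i + 1) = pc (cc x y i) x := by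
  obtain ⟨i, rfl⟩ := Nat.exists_eq_add_of_le' hi
  rfl

lemma map_wwT (f : G →* G') (p : ℕ) (x y : G) (i j k : ℕ) :
    f (wwT p x y i j k) = ((List.range (p ^ k - p ^ (k - 1))).map fun t =>
      itc (f x) (pc (f (cc x y (i + t + 1))) (f (cc x y (j + t))))
        (p ^ k - p ^ (k - 1) - 1 - t)).prod := by
  simp only [wwT, map_list_prod, List.map_map, Function.comp_def, map_itc, zz, map_pc]

lemma map_GammaK_le (f : G →* G') (p : ℕ) (x y : G) (k : ℕ) :
    (GammaK p x y k).map f ≤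
      Subgroup.closure {g | ∃ j, p ^ (k - 1) ≤ j ∧ g = f (cc x y j)} ⊔
        ⁅seqSubgroup fun i => f (cc x y i), seqSubgroup fun i => f (cc x y i)⁆ := by
  rw [GammaK, MonoidHom.map_closure, Subgroup.closure_le]
  rintro _ ⟨_, ⟨j, hj, rfl⟩ | ⟨m, n, hn, hnm, -, rfl⟩, rfl⟩
  · exact Subgroup.mem_sup_left (Subgroup.subset_closure ⟨j, hj, rfl⟩)
  · refine Subgroup.mem_sup_right ?_
    rw [zz, map_pc]
    exact pc_mem_commutator (seq_mem_seqSubgroup (by omega)) (seq_mem_seqSubgroup hn)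

instance LsubT_normal (p : ℕ) (x y : G) (k : ℕ) : (LsubT p x y k).Normal :=
  Subgroup.normalClosure_normal

end Concrete

theorem lemma_tilde_Lk_i_general (p : ℕ) (hp : p.Prime) (x y : G)
    (hca : ∀ z ∈ ZsubP x y, ∀ h ∈ Hsub x y, z * h = h * z)
    (k : ℕ) (h₁ h₂ : G)
    (hh₁ : h₁ ∈ GammaK p x y k) (hh₂ : h₂ ∈ GammaK p x y k) :
    (itc x h₁ (p ^ k - p ^ (k - 1)) * itc x h₂ (p ^ k - p ^ (k - 1)))⁻¹ *
        itc x (h₁ * h₂) (p ^ k - p ^ (k - 1)) ∈ LsubT p x y k := by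
  let π := QuotientGroup.mk' (LsubT p x y k)
  have hmul := itc_mul_of_mem_closure (X := π x) (C := fun i => π (cc x y i))
    (fun i hi => by simp only [cc_succ x y hi, map_pc])
    (fun m n i hm hn hi => by
      rw [← map_pc]
      exact Commute.map (hca _ (Subgroup.subset_closure ⟨m, n, hm, hn, rfl⟩) _
        (Subgroup.subset_closure ⟨i, hi, rfl⟩)) π)
    (r := p ^ k - p ^ (k - 1)) (Nat.one_le_pow _ _ hp.pos)
    (fun i j hi hj => by
      rw [← map_wwT, ← MonoidHom.mem_ker, QuotientGroup.ker_mk']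
      exact Subgroup.subset_normalClosure (.inl ⟨i, j, hi, hj, rfl⟩))
    (map_GammaK_le π p x y k (Subgroup.mem_map_of_mem π hh₁))
    (map_GammaK_le π p x y k (Subgroup.mem_map_of_mem π hh₂))
  rw [← QuotientGroup.ker_mk' (LsubT p x y k), MonoidHom.mem_ker]
  show π _ = 1
  simp only [map_mul, map_inv, map_itc, hmul, inv_mul_cancel]

theorem lemma_tilde_Lk_i (p : ℕ) (hp : p.Prime) (hodd : Odd p) (x y : G)
    (hca : ∀ z ∈ ZsubP x y, ∀ h ∈ Hsub x y, z * h = h * z)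
    (hHp : ∀ h ∈ Hsub x y, h ^ p = 1)
    (k : ℕ) (hk : 1 ≤ k) (h₁ h₂ : G)
    (hh₁ : h₁ ∈ GammaK p x y k) (hh₂ : h₂ ∈ GammaK p x y k) :
    (itc x h₁ (p ^ k - p ^ (k - 1)) * itc x h₂ (p ^ k - p ^ (k - 1)))⁻¹ *
        itc x (h₁ * h₂) (p ^ k - p ^ (k - 1)) ∈ LsubT p x y k :=
  lemma_tilde_Lk_i_general p hp x y hca k h₁ h₂ hh₁ hh₂

end Paper
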